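/- On the complex torus ℂ𝕋ⁿ = ℂⁿ/(2π(ℤ+iℤ))ⁿ, let Φ(z) = 2 Σ_{p=1}^P c_p^{-1} φ^p χ_{a^p,b^p}(z) with χ_{a,b}(z) = (2π)^{-n} e^{i(⟨x,a⟩+⟨y,b⟩)}, φ^p ∈ ℂᵐ, (a^p,b^p) ∈ ℤⁿ×ℤⁿ pairwise distinct, c_p ∈ ℕ₊. Then ρ_Φ = Σ_{p=1}^P conj(φ^p ⊗ ψ^p) ⊙ (φ^p ⊗ ψ^p), where ψ^p = (a^p + i b^p)/c_p. In particular ρ_Φ is separable. -/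

import Mathlib

open MeasureTheory Complex Finset Real
open scoped ComplexConjugate

/-- A fundamental domain for the complex torus `ℂ𝕋ⁿ = ℂⁿ/(2π(ℤ+iℤ))ⁿ`,
realized inside `ℂⁿ = Fin n → ℂ`. -/
def torusCube (n : ℕ) : Set (Fin n → ℂ) :=
  {z | ∀ j, (z j).re ∈ Set.Ico (0 : ℝ) (2 * π) ∧ (z j).im ∈ Set.Ico (0 : ℝ) (2 * π)}

/-- The character `χ_{a,b}(z) = (2π)^{-n} e^{i(⟨x,a⟩+⟨y,b⟩)}` on the torus. -/
noncomputable def torusChar {n : ℕ} (a b : Fin n → ℤ) (z : Fin n → ℂ) : ℂ :=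
  (((2 * π : ℝ) ^ n)⁻¹ : ℝ) *
    Complex.exp (I * ∑ j, ((z j).re * (a j : ℝ) + (z j).im * (b j : ℝ)))

/-!
The conjugate differential `∂̄_{z_j}Φ_i = Σ_p C_p^{ij} χ_{a^p,b^p}` is a finite combination of
characters, and these are orthonormal on the fundamental domain: the integral of
`conj χ_{a,b} · χ_{a',b'}` factors over the `2n` real coordinates into integrals
`∫₀^{2π} e^{ikx} dx = 2π δ_{k0}`, and the normalisation `(2π)^{-n}` compensates the volume
`(2π)^{2n}`. As the frequencies are distinct, `ρ_Φ` collapses to the diagonal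
`Σ_p conj(C_p^{ij}) C_p^{kl}`, and `C_p^{ij} = i φ^p_i ψ^p_j` with `|i| = 1`.
-/

theorem setIntegral_univ_pi_prod {𝕜 ι : Type*} [RCLike 𝕜] [Fintype ι] {E : ι → Type*}
    [∀ i, MeasureSpace (E i)] [∀ i, SigmaFinite (volume : Measure (E i))]
    (s : (i : ι) → Set (E i)) (f : (i : ι) → E i → 𝕜) :
    ∫ x in Set.univ.pi s, ∏ i, f i (x i) = ∏ i, ∫ x in s i, f i x := by
  rw [volume_pi, Measure.restrict_pi_pi]
  exact integral_fintype_prod_eq_prod f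

theorem setIntegral_reProdIm_mul {𝕜 : Type*} [RCLike 𝕜] (f g : ℝ → 𝕜) (s t : Set ℝ) :
    ∫ w in s ×ℂ t, f w.re * g w.im = (∫ x in s, f x) * ∫ y in t, g y := by
  rw [← setIntegral_prod_mul, ← Measure.volume_eq_prod]
  exact (volume_preserving_equiv_real_prod.setIntegral_preimage_emb
    measurableEquivRealProd.measurableEmbedding (fun p => f p.1 * g p.2) (s ×ˢ t))

theorem integral_Ico_exp_int_mul_I (k : ℤ) :
    ∫ x in Set.Ico 0 (2 * π), exp (I * (x * k)) = if k = 0 then ((2 * π : ℝ) : ℂ) else 0 := by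
  rw [Measure.restrict_congr_set Ico_ae_eq_Ioc,
    ← intervalIntegral.integral_of_le two_pi_pos.le]
  split_ifs with hk
  · simp [hk]
  · have hIk : I * k ≠ 0 := mul_ne_zero I_ne_zero (Int.cast_ne_zero.2 hk)
    have hperiod : exp (I * k * (2 * π)) = 1 := by
      rw [show I * k * (2 * π) = k * (2 * π * I) by ring]
      exact exp_int_mul_two_pi_mul_I k
    simp_rw [show ∀ x : ℝ, I * (x * k) = I * k * x from fun x => by ring]
    simp [integral_exp_mul_complex hIk, hperiod]

theorem torusCube_eq_pi (n : ℕ) :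
    torusCube n = Set.univ.pi fun _ => Set.Ico 0 (2 * π) ×ℂ Set.Ico 0 (2 * π) := by
  ext z
  simp [torusCube, Set.mem_pi, mem_reProdIm]

theorem integral_Ico_reProdIm_exp_int_mul_I (α β : ℤ) :
    ∫ w in Set.Ico 0 (2 * π) ×ℂ Set.Ico 0 (2 * π), exp (I * (w.re * α)) * exp (I * (w.im * β)) =
      if α = 0 ∧ β = 0 then ((2 * π : ℝ) : ℂ) * ((2 * π : ℝ) : ℂ) else 0 := by
  rw [setIntegral_reProdIm_mul (fun x : ℝ => exp (I * (x * α))) (fun y : ℝ => exp (I * (y * β))),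
    integral_Ico_exp_int_mul_I, integral_Ico_exp_int_mul_I, ite_zero_mul_ite_zero]

theorem conj_torusChar_mul_torusChar {n : ℕ} (a b a' b' : Fin n → ℤ) (z : Fin n → ℂ) :
    conj (torusChar a b z) * torusChar a' b' z =
      ((((2 * π : ℝ) ^ n)⁻¹ : ℝ) : ℂ) ^ 2 *
        ∏ j, exp (I * ((z j).re * (a' j - a j : ℤ))) * exp (I * ((z j).im * (b' j - b j : ℤ))) := by
  simp only [torusChar, map_mul, conj_ofReal, ← exp_conj, conj_I]
  simp_rw [mul_mul_mul_comm, ← Complex.exp_add, sq, ← Complex.exp_sum]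
  congr 2
  push_cast
  rw [Finset.mul_sum, Finset.mul_sum, ← Finset.sum_add_distrib]
  exact Finset.sum_congr rfl fun j _ => by ring

theorem integral_conj_torusChar_mul_torusChar {n : ℕ} (a b a' b' : Fin n → ℤ) :
    ∫ z in torusCube n, conj (torusChar a b z) * torusChar a' b' z =
      if a = a' ∧ b = b' then 1 else 0 := by
  simp_rw [conj_torusChar_mul_torusChar, integral_const_mul, torusCube_eq_pi,
    setIntegral_univ_pi_prod _
      (fun j (w : ℂ) => exp (I * (w.re * (a' j - a j : ℤ))) * exp (I * (w.im * (b' j - b j : ℤ)))),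
    integral_Ico_reProdIm_exp_int_mul_I, Fintype.prod_ite_zero]
  have hfreq : (∀ j, a' j - a j = 0 ∧ b' j - b j = 0) ↔ a = a' ∧ b = b' := by
    simp only [sub_eq_zero, forall_and, funext_iff, eq_comm]
  by_cases hequal : a = a' ∧ b = b'
  · rw [if_pos (hfreq.2 hequal), if_pos hequal]
    rw [Finset.prod_const, Finset.card_univ, Fintype.card_fin]
    norm_cast
    rw [← sq, ← pow_mul, mul_comm 2 n, pow_mul, ← mul_pow,
      inv_mul_cancel₀ (pow_ne_zero n two_pi_pos.ne'), one_pow]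
  · rw [if_neg (mt hfreq.1 hequal), if_neg hequal, mul_zero]

theorem norm_torusChar {n : ℕ} (a b : Fin n → ℤ) (z : Fin n → ℂ) :
    ‖torusChar a b z‖ = ((2 * π) ^ n)⁻¹ := by
  rw [torusChar, norm_mul, norm_real, mul_comm I, norm_exp_ofReal_mul_I, mul_one, norm_of_nonneg]
  positivity

theorem volume_torusCube_ne_top (n : ℕ) : volume (torusCube n) ≠ ⊤ := by
  rw [torusCube_eq_pi]
  exact (Bornology.IsBounded.pi fun _ =>
    Metric.isBounded_Ico _ _ |>.reProdIm (Metric.isBounded_Ico _ _)).measure_lt_top.ne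

theorem integrableOn_conj_torusChar_mul_torusChar {n : ℕ} (a b a' b' : Fin n → ℤ) :
    IntegrableOn (fun z => conj (torusChar a b z) * torusChar a' b' z) (torusCube n) := by
  have hcont (a b : Fin n → ℤ) : Continuous (torusChar a b) := by unfold torusChar; fun_prop
  refine Measure.integrableOn_of_bounded (M := ((2 * π) ^ n)⁻¹ * ((2 * π) ^ n)⁻¹)
    (volume_torusCube_ne_top n)
    ((continuous_conj.comp (hcont a b)).mul (hcont a' b')).aestronglyMeasurable ?_
  filter_upwards with z
  rw [norm_mul, RCLike.norm_conj, norm_torusChar, norm_torusChar]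

theorem integral_conj_sum_mul_sum_of_orthonormal {α ι 𝕜 : Type*} [MeasurableSpace α]
    {μ : Measure α} [Fintype ι] [DecidableEq ι] [RCLike 𝕜] (e : ι → α → 𝕜)
    (hint : ∀ p q, Integrable (fun x => conj (e p x) * e q x) μ)
    (horth : ∀ p q, ∫ x, conj (e p x) * e q x ∂μ = if p = q then 1 else 0) (C C' : ι → 𝕜) :
    ∫ x, conj (∑ p, C p * e p x) * ∑ q, C' q * e q x ∂μ = ∑ p, conj (C p) * C' p := by
  have hexpand (x : α) : conj (∑ p, C p * e p x) * ∑ q, C' q * e q x =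
      ∑ p, ∑ q, conj (C p) * C' q * (conj (e p x) * e q x) := by
    rw [map_sum, Finset.sum_mul_sum]
    exact Finset.sum_congr rfl fun p _ => Finset.sum_congr rfl fun q _ => by rw [map_mul]; ring
  simp_rw [hexpand]
  rw [integral_finsetSum _ fun p _ => integrable_finsetSum _ fun q _ => (hint p q).const_mul _]
  refine Finset.sum_congr rfl fun p _ => ?_
  rw [integral_finsetSum _ fun q _ => (hint p q).const_mul _]
  simp_rw [integral_const_mul, horth, mul_ite, mul_one, mul_zero, Finset.sum_ite_eq,
    Finset.mem_univ, if_true]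

theorem torus_rhoPhi_separable_general (n m P : ℕ) (φ : Fin P → Fin m → ℂ)
    (a b : Fin P → Fin n → ℤ) (c : Fin P → ℕ)
    (hdist : Function.Injective (fun p => (a p, b p)))
    (D : (Fin n → ℂ) → Fin m → Fin n → ℂ)
    (hD : ∀ z i j, D z i j =
      ∑ p, I * ((c p : ℂ))⁻¹ * φ p i * ((a p j : ℂ) + I * (b p j : ℂ)) *
        torusChar (a p) (b p) z)
    (ψ : Fin P → Fin n → ℂ)
    (hψ : ∀ p j, ψ p j = ((a p j : ℂ) + I * (b p j : ℂ)) / (c p : ℂ)) :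
    ∀ i j k l, (∫ z in torusCube n, conj (D z i j) * D z k l) =
      ∑ p, conj (φ p i * ψ p j) * (φ p k * ψ p l) := by
  intro i j k l
  have horth (p q : Fin P) : ∫ z in torusCube n, conj (torusChar (a p) (b p) z) *
      torusChar (a q) (b q) z = if p = q then 1 else 0 := by
    rw [integral_conj_torusChar_mul_torusChar]
    exact if_congr (by simpa only [Prod.ext_iff] using hdist.eq_iff) rfl rfl
  have hcoeff (p : Fin P) (i : Fin m) (j : Fin n) :
      I * ((c p : ℂ))⁻¹ * φ p i * ((a p j : ℂ) + I * (b p j : ℂ)) = I * (φ p i * ψ p j) := by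
    rw [hψ]; ring
  simp_rw [hD, hcoeff]
  rw [integral_conj_sum_mul_sum_of_orthonormal _
    (fun p q => integrableOn_conj_torusChar_mul_torusChar _ _ _ _) horth]
  refine Finset.sum_congr rfl fun p _ => ?_
  rw [map_mul, conj_I]
  linear_combination (-(conj (φ p i * ψ p j) * (φ p k * ψ p l))) * I_sq

/-- for the trigonometric polynomial
`Φ(z) = 2 Σ_p c_p⁻¹ φ^p χ_{a^p,b^p}(z)` on the torus (with pairwise distinct
frequencies `(a^p,b^p)` and `c_p ∈ ℕ₊`), whose conjugate differential is
`∂̄_{z_j}Φ_i = Σ_p i c_p⁻¹ φ^p_i (a^p_j + i b^p_j) χ_{a^p,b^p}`, the form `ρ_Φ`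
equals `Σ_p conj(φ^p ⊗ ψ^p) ⊙ (φ^p ⊗ ψ^p)` with `ψ^p = (a^p + i b^p)/c_p`;
in particular `ρ_Φ` is separable. -/
theorem torus_rhoPhi_separable (n m P : ℕ) (φ : Fin P → Fin m → ℂ)
    (a b : Fin P → Fin n → ℤ) (c : Fin P → ℕ) (hc : ∀ p, 0 < c p)
    (hdist : Function.Injective (fun p => (a p, b p)))
    (D : (Fin n → ℂ) → Fin m → Fin n → ℂ)
    (hD : ∀ z i j, D z i j =
      ∑ p, I * ((c p : ℂ))⁻¹ * φ p i * ((a p j : ℂ) + I * (b p j : ℂ)) *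
        torusChar (a p) (b p) z)
    (ψ : Fin P → Fin n → ℂ)
    (hψ : ∀ p j, ψ p j = ((a p j : ℂ) + I * (b p j : ℂ)) / (c p : ℂ)) :
    ∀ i j k l, (∫ z in torusCube n, conj (D z i j) * D z k l) =
      ∑ p, conj (φ p i * ψ p j) * (φ p k * ψ p l) :=
  torus_rhoPhi_separable_general n m P φ a b c hdist D hD ψ hψ
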